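/- arXiv:0908.0542 — 2 statements merged into one kernel-verified Lean document; each statement's English description precedes it below -/
import Mathlib

section
/- Let (a,b,c) be an admissible triple of half-integers (so in particular |c−b| ≤ a). Then q^{2(c−b)b} · C^{a,b,c}_{c−b,b,c} = i^{2(c−a−b)} q^{c²+c−(a²+a)−(b²+b)} · C^{b,a,c}_{b,c−b,c}. (This is the highest-weight coefficient identity expressing that a positive crossing composed with a trivalent vertex equals the vertex with the legs exchanged, corrected by half-twist factors H_x = i^{2x}q^{x²+x}.) -/
noncomputable section
open scoped Classical

namespace QSpin

/-- The ambient field: rational functions over `ℂ` (which contains `ℚ(i)`),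
in a variable `X` which represents the formal fourth root `q^(1/4)`. -/
abbrev K : Type := RatFunc ℂ

/-- `X` represents `q^(1/4)`. -/
def X : K := RatFunc.X

/-- The quantum variable `q = X^4`. -/
def q : K := X ^ 4

/-- `i = √-1`, as a constant of `K`. -/
def ii : K := RatFunc.C Complex.I

/-- `q` raised to a rational power `r` (meaningful whenever `4 * r ∈ ℤ`). -/
def qpow (r : ℚ) : K := X ^ (4 * r).num

/-- Half of an integer, as a rational number: a half-integer is encoded by its double. -/
def hf (n : ℤ) : ℚ := (n : ℚ) / 2

/-- Integer powers of `i`. -/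
def ipow (n : ℤ) : K := ii ^ n

/-- Integer powers of `-1`. -/
def m1pow (n : ℤ) : K := (-1 : K) ^ n

/-- The quantum integer `[n] = (q^n - q^(-n))/(q - q⁻¹)`. -/
def qint (n : ℤ) : K := (q ^ n - q ^ (-n)) / (q - q⁻¹)

/-- The quantum factorial `[n]!`. -/
def qfact (n : ℕ) : K := ∏ j ∈ Finset.range n, qint (j + 1)

/-- The quantum factorial of an integer (zero for negative arguments). -/
def qfactz (n : ℤ) : K := if 0 ≤ n then qfact n.toNat else 0

/-- The quantum binomial `[n choose k]`, vanishing unless `0 ≤ k ≤ n`. -/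
def qbin (n k : ℤ) : K :=
  if 0 ≤ k ∧ k ≤ n then qfactz n / (qfactz k * qfactz (n - k)) else 0

/-- Admissibility of a triple of half-integers (encoded by their doubles):
all nonnegative, total sum an integer (i.e. the sum of the doubles is even), and
the triangular inequalities hold. -/
def Adm (a b c : ℤ) : Prop :=
  0 ≤ a ∧ 0 ≤ b ∧ 0 ≤ c ∧ 2 ∣ (a + b + c) ∧ c ≤ a + b ∧ a ≤ b + c ∧ b ≤ c + a

/-- The quantum Clebsch-Gordan coefficient `C^{a,b,c}_{u,v,t}`; all six half-integer
parameters are encoded by their doubles. -/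
def CG (a b c u v t : ℤ) : K :=
  if u + v = t then
    ipow ((c - a - b) / 2) * m1pow ((b - v) / 2 - (c - t) / 2) *
      qpow ((hf b - hf v) * (hf b + hf v + 1) / 2 - (hf a - hf u) * (hf a + hf u + 1) / 2) *
      (qfactz ((a + b - c) / 2) * qfactz ((b + c - a) / 2) * qfactz ((c + a - b) / 2) /
        qfactz c) *
      ∑ z ∈ Finset.range (((c - t) / 2).toNat + 1),
        m1pow z *
          qpow (((z : ℚ) - (((c - t) / 2 - (z : ℤ) : ℤ) : ℚ)) * (hf c + hf t + 1) / 2) *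
          qbin ((a + u) / 2 + z) ((a + c - b) / 2) *
          qbin ((b + v) / 2 + ((c - t) / 2 - (z : ℤ))) ((b + c - a) / 2) *
          qbin ((c - t) / 2) z
  else 0

/-- The coefficient `W^{a,b,c}_{u,v,t} = C^{a,b,c}_{u,v,-t} · i^{-2t} q^{-t} · [2c]!`. -/
def W (a b c u v t : ℤ) : K := CG a b c u v (-t) * ipow (-t) * qpow (-(hf t)) * qfactz c

/-- The coefficient `P^{a,b,c}_{u,v,t} = C^{a,c,b}_{-u,t,v} · i^{2u} q^{u} / [2a]!`. -/
def Pc (a b c u v t : ℤ) : K := CG a c b (-u) t v * ipow u * qpow (hf u) / qfactz a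

/-- The coefficient `M^{a,b,c}_{u,v,t} = P^{a,b,c}_{u,v,-t} · i^{-2t} q^{-t} / [2c]!`. -/
def M (a b c u v t : ℤ) : K := Pc a b c u v (-t) * ipow (-t) * qpow (-(hf t)) / qfactz c

/-!
At the highest weight `t = c` the sum defining `C^{a,b,c}_{u,v,c}` has the single term `z = 0`,
and exchanging the two legs only permutes the triangle factorials and the two binomials of
what is left. The two sides of the identity therefore differ by a sign `(-1)^{a+b-c}`, which the
phase `i^{2(c-a-b)}` cancels, and by powers of `q` whose exponents agree by a polynomial
identity; the integrality of `a + b + c` makes all these exponents of `q^{1/4}` integers.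
-/

lemma X_ne_zero : X ≠ 0 := RatFunc.X_ne_zero

lemma qpow_eq_X_zpow (n : ℤ) {r : ℚ} (h : 4 * r = n) : qpow r = X ^ n := by
  rw [qpow, h, Rat.num_intCast]

lemma qpow_zero : qpow 0 = 1 := by
  simp [qpow]

lemma qpow_add {r s : ℚ} {m n : ℤ} (hr : 4 * r = m) (hs : 4 * s = n) :
    qpow (r + s) = qpow r * qpow s := by
  rw [qpow_eq_X_zpow m hr, qpow_eq_X_zpow n hs,
    qpow_eq_X_zpow (m + n) (by rw [mul_add, hr, hs, Int.cast_add]), zpow_add₀ X_ne_zero]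

lemma m1pow_zero : m1pow 0 = 1 := zpow_zero _

lemma m1pow_mul_m1pow_neg (n : ℤ) : m1pow n * m1pow (-n) = 1 := by
  rw [m1pow, m1pow, ← zpow_add₀ (neg_ne_zero.mpr one_ne_zero), add_neg_cancel, zpow_zero]

lemma ipow_two_mul (n : ℤ) : ipow (2 * n) = m1pow n := by
  rw [ipow, m1pow, zpow_mul, ii, zpow_two, ← map_mul, Complex.I_mul_I, map_neg, map_one]

lemma qbin_zero_zero : qbin 0 0 = 1 := by
  simp [qbin, qfactz, qfact]

def highestWeightCore (a b c u v : ℤ) : K :=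
  qfactz ((a + b - c) / 2) * qfactz ((b + c - a) / 2) * qfactz ((c + a - b) / 2) / qfactz c *
    (qbin ((a + u) / 2) ((a + c - b) / 2) * qbin ((b + v) / 2) ((b + c - a) / 2))

lemma highestWeightCore_swap (a b c u v : ℤ) :
    highestWeightCore b a c v u = highestWeightCore a b c u v := by
  rw [highestWeightCore, highestWeightCore, add_comm b a, add_comm c b, add_comm a c]
  ring

lemma CG_highest_weight {a b c u v : ℤ} (huv : u + v = c) :
    CG a b c u v c = ipow ((c - a - b) / 2) * m1pow ((b - v) / 2) *
      qpow ((hf b - hf v) * (hf b + hf v + 1) / 2 - (hf a - hf u) * (hf a + hf u + 1) / 2) *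
      highestWeightCore a b c u v := by
  simp only [CG, highestWeightCore, if_pos huv, sub_self, Int.zero_ediv, sub_zero,
    Int.toNat_zero, zero_add, Finset.sum_range_one, Nat.cast_zero, Int.cast_zero, zero_mul,
    zero_div, add_zero, m1pow_zero, qpow_zero, qbin_zero_zero, one_mul, mul_one, mul_assoc]

section HalfTwist

variable {a b c d : ℤ}

lemma halftwist_phase (hd : a + b + c = 2 * d) :
    ipow ((c - a - b) / 2)
      = ipow (c - a - b) * ipow ((c - b - a) / 2) * m1pow ((a - (c - b)) / 2) := by
  rw [show (c - a - b) / 2 = c - d by omega, show (c - b - a) / 2 = c - d by omega,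
    show (a - (c - b)) / 2 = -(c - d) by omega, show c - a - b = 2 * (c - d) by omega,
    ipow_two_mul, mul_right_comm, m1pow_mul_m1pow_neg, one_mul]

lemma halftwist_qpow (hd : a + b + c = 2 * d) :
    qpow (2 * (hf c - hf b) * hf b) *
        qpow ((hf b - hf b) * (hf b + hf b + 1) / 2 -
          (hf a - hf (c - b)) * (hf a + hf (c - b) + 1) / 2)
      = qpow (hf c ^ 2 + hf c - (hf a ^ 2 + hf a) - (hf b ^ 2 + hf b)) *
        qpow ((hf a - hf (c - b)) * (hf a + hf (c - b) + 1) / 2 -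
          (hf b - hf b) * (hf b + hf b + 1) / 2) := by
  have hdQ : (a + b + c : ℚ) = 2 * d := by exact_mod_cast hd
  rw [← qpow_add (m := 2 * (c - b) * b) (n := -((d - c) * (a + c - b + 2))),
    ← qpow_add (m := c ^ 2 + 2 * c - a ^ 2 - 2 * a - b ^ 2 - 2 * b)
      (n := (d - c) * (a + c - b + 2))]
  · congr 1
    simp only [hf]
    push_cast
    ring
  all_goals simp only [hf]; push_cast
  · ring
  · linear_combination ((a + c - b + 2 : ℚ) / 2) * hdQ
  · ring
  · linear_combination (-(a + c - b + 2 : ℚ) / 2) * hdQ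

end HalfTwist

/-- The highest-weight coefficient identity: for an admissible triple
`(a,b,c)` of half-integers (encoded by doubles),
`q^{2(c−b)b} · C^{a,b,c}_{c−b,b,c} = i^{2(c−a−b)} q^{c²+c−(a²+a)−(b²+b)} · C^{b,a,c}_{b,c−b,c}`. -/
theorem halftwist_vertex (a b c : ℤ) (h : Adm a b c) :
    qpow (2 * (hf c - hf b) * hf b) * CG a b c (c - b) b c
      = ipow (c - a - b) *
          qpow (hf c ^ 2 + hf c - (hf a ^ 2 + hf a) - (hf b ^ 2 + hf b)) *
          CG b a c b (c - b) c := by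
  obtain ⟨-, -, -, ⟨d, hd⟩, -, -, -⟩ := h
  rw [CG_highest_weight (by ring), CG_highest_weight (by ring),
    highestWeightCore_swap a b c (c - b) b,
    sub_self, Int.zero_ediv, m1pow_zero, halftwist_phase hd]
  linear_combination (ipow (c - a - b) * ipow ((c - b - a) / 2) * m1pow ((a - (c - b)) / 2) *
    highestWeightCore a b c (c - b) b) * halftwist_qpow hd

end QSpin
end
end

section
/- Integrality of renormalized vertex weights: let (a,b,c) be an admissible triple of half-integers and let u,v,t be half-integers with |u| ≤ a, |v| ≤ b, |t| ≤ c, u−a, v−b, t−c ∈ ℤ and u+v+t = 0. Then the renormalized coefficient NW^{a,b,c}_{u,v,t} := W^{a,b,c}_{u,v,t} / ([a+b−c]! [b+c−a]! [c+a−b]!) satisfies i^{a+b+c} · NW^{a,b,c}_{u,v,t} ∈ ℤ[q^{1/2}, q^{−1/2}], i.e. it is a Laurent polynomial in q^{1/2} with integer coefficients. -/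
noncomputable section
open scoped Classical

namespace QSpin

/-- The renormalized vertex coefficient
`NW^{a,b,c}_{u,v,t} = W^{a,b,c}_{u,v,t} / ([a+b−c]! [b+c−a]! [c+a−b]!)`. -/
def NW (a b c u v t : ℤ) : K :=
  W a b c u v t /
    (qfactz ((a + b - c) / 2) * qfactz ((b + c - a) / 2) * qfactz ((c + a - b) / 2))

/-- The subring `ℤ[q^{1/2}, q^{-1/2}]` of `K` (recall `X = q^{1/4}`). -/
def ZLaurentHalf : Subring K := Subring.closure {X ^ 2, (X ^ 2)⁻¹}

/-!
In `W` the factorial prefactor `[a+b−c]! [b+c−a]! [c+a−b]! / [2c]!` of the Clebsch–Gordan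
coefficient cancels against `[2c]!` and the renormalisation, so `i^{a+b+c} · NW` is a sign
`i^{a+b+c} i^{c−a−b} i^{−2t} = (−1)^{c−t}`, times powers of `q` with exponents in `½ℤ`, times a
signed sum of products of `q`-binomial coefficients. The latter are Laurent polynomials in `q`
with integer coefficients by the `q`-Pascal rule, which comes from `[m] = q^k [m−k] + q^{k−m} [k]`.
-/

lemma X_pow_ne_one {n : ℕ} (hn : n ≠ 0) : X ^ n ≠ 1 := fun h =>
  RatFunc.transcendental_X.pow (Nat.pos_of_ne_zero hn) (h ▸ isAlgebraic_one)

lemma q_ne_zero : q ≠ 0 := pow_ne_zero _ RatFunc.X_ne_zero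

lemma q_zpow_ne_one {n : ℤ} (hn : 0 < n) : q ^ n ≠ 1 := by
  lift n to ℕ using hn.le
  rw [zpow_natCast, q, ← pow_mul]
  exact X_pow_ne_one (by omega)

lemma q_zpow_sub_zpow_neg_ne_zero {n : ℤ} (hn : 0 < n) : q ^ n - q ^ (-n) ≠ 0 := by
  rw [sub_ne_zero]
  intro h
  apply q_zpow_ne_one (show 0 < 2 * n by omega)
  rw [two_mul, zpow_add₀ q_ne_zero]
  nth_rw 1 [h]
  rw [← zpow_add₀ q_ne_zero, neg_add_cancel, zpow_zero]

lemma qint_ne_zero {n : ℤ} (hn : 0 < n) : qint n ≠ 0 :=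
  div_ne_zero (q_zpow_sub_zpow_neg_ne_zero hn) (by simpa using q_zpow_sub_zpow_neg_ne_zero one_pos)

lemma qfact_ne_zero (n : ℕ) : qfact n ≠ 0 :=
  Finset.prod_ne_zero_iff.mpr fun _ _ => qint_ne_zero (by omega)

lemma qfactz_ne_zero {n : ℤ} (hn : 0 ≤ n) : qfactz n ≠ 0 := by
  rw [qfactz, if_pos hn]
  exact qfact_ne_zero _

lemma qfact_zero : qfact 0 = 1 := Finset.prod_range_zero _

lemma qfact_succ (n : ℕ) : qfact (n + 1) = qint ((n : ℤ) + 1) * qfact n := by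
  rw [qfact, qfact, Finset.prod_range_succ, mul_comm]

lemma qint_eq_add (m k : ℤ) : qint m = q ^ k * qint (m - k) + q ^ (k - m) * qint k := by
  simp only [qint, ← mul_div_assoc, ← add_div, mul_sub, ← zpow_add₀ q_ne_zero]
  ring_nf

lemma qbin_natCast (n k : ℕ) (hk : k ≤ n) :
    qbin n k = qfact n / (qfact k * qfact (n - k)) := by
  rw [qbin, if_pos ⟨by positivity, by exact_mod_cast hk⟩, ← Nat.cast_sub hk]
  simp [qfactz]

lemma qbin_natCast_zero (n : ℕ) : qbin n 0 = 1 := by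
  simpa [qfact_zero, qfact_ne_zero] using qbin_natCast n 0 n.zero_le

lemma qbin_natCast_self (n : ℕ) : qbin n n = 1 := by
  simpa [qfact_zero, qfact_ne_zero] using qbin_natCast n n le_rfl

lemma qbin_natCast_of_lt {n k : ℕ} (h : n < k) : qbin n k = 0 := by
  rw [qbin, if_neg]
  exact fun hk => absurd (by exact_mod_cast hk.2 : k ≤ n) (by omega)

lemma qbin_succ_succ {n k : ℕ} (hk : k < n) :
    qbin (n + 1 : ℕ) (k + 1 : ℕ) =
      q ^ ((k : ℤ) + 1) * qbin n (k + 1 : ℕ) + q ^ ((k : ℤ) - n) * qbin n k := by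
  obtain ⟨d, rfl⟩ := Nat.exists_eq_add_of_lt hk
  rw [qbin_natCast _ _ (by omega), qbin_natCast _ _ (by omega), qbin_natCast _ _ (by omega),
    show k + d + 1 + 1 - (k + 1) = d + 1 by omega, show k + d + 1 - (k + 1) = d by omega,
    show k + d + 1 - k = d + 1 by omega, qfact_succ (k + d + 1), qfact_succ k, qfact_succ d,
    qint_eq_add _ ((k : ℤ) + 1)]
  have := qint_ne_zero (show 0 < (d : ℤ) + 1 by omega)
  have := qint_ne_zero (show 0 < (k : ℤ) + 1 by omega)
  have := qfact_ne_zero k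
  have := qfact_ne_zero d
  field_simp
  push_cast
  ring_nf

lemma X_sq_mem : X ^ 2 ∈ ZLaurentHalf := Subring.subset_closure (by simp)

lemma X_sq_inv_mem : (X ^ 2)⁻¹ ∈ ZLaurentHalf := Subring.subset_closure (by simp)

lemma X_sq_zpow_mem (k : ℤ) : (X ^ 2) ^ k ∈ ZLaurentHalf := by
  have hX : (X ^ 2 : K) ≠ 0 := pow_ne_zero _ RatFunc.X_ne_zero
  induction k using Int.induction_on with
  | zero => simp
  | succ k ih => simpa [zpow_add_one₀ hX] using mul_mem ih X_sq_mem
  | pred k ih => simpa [zpow_sub_one₀ hX] using mul_mem ih X_sq_inv_mem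

lemma q_zpow_mem (n : ℤ) : q ^ n ∈ ZLaurentHalf := by
  simpa [q, ← pow_mul, zpow_mul] using X_sq_zpow_mem (2 * n)

lemma qpow_mem_of_two_mul_eq {r : ℚ} (k : ℤ) (h : 2 * r = k) : qpow r ∈ ZLaurentHalf := by
  have hnum : (4 * r).num = 2 * k := by
    rw [show 4 * r = ((2 * k : ℤ) : ℚ) by push_cast; linarith, Rat.num_intCast]
  simpa [qpow, hnum, zpow_mul] using X_sq_zpow_mem k

lemma m1pow_mem (n : ℤ) : m1pow n ∈ ZLaurentHalf := by
  rcases Int.even_or_odd n with h | h <;> simp [m1pow, h.neg_one_zpow]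

lemma qbin_natCast_mem (n k : ℕ) : qbin n k ∈ ZLaurentHalf := by
  induction n generalizing k with
  | zero =>
    rcases k with _ | k
    · rw [qbin_natCast_self]; exact one_mem _
    · rw [qbin_natCast_of_lt (by omega)]; exact zero_mem _
  | succ n ih =>
    rcases k with _ | k
    · rw [Nat.cast_zero, qbin_natCast_zero]; exact one_mem _
    rcases lt_trichotomy k n with hk | rfl | hk
    · rw [qbin_succ_succ hk]
      exact add_mem (mul_mem (q_zpow_mem _) (ih _)) (mul_mem (q_zpow_mem _) (ih _))
    · rw [qbin_natCast_self]; exact one_mem _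
    · rw [qbin_natCast_of_lt (by omega)]; exact zero_mem _

lemma qbin_mem (n k : ℤ) : qbin n k ∈ ZLaurentHalf := by
  by_cases h : 0 ≤ k ∧ k ≤ n
  · lift n to ℕ using h.1.trans h.2
    lift k to ℕ using h.1
    exact qbin_natCast_mem n k
  · simp [qbin, h]

lemma ii_ne_zero : ii ≠ 0 := by simp [ii]

lemma ipow_add (m n : ℤ) : ipow (m + n) = ipow m * ipow n :=
  zpow_add₀ ii_ne_zero m n

def cgSum (a b c u v t : ℤ) : K :=
  ∑ z ∈ Finset.range (((c - t) / 2).toNat + 1),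
    m1pow z *
      qpow (((z : ℚ) - (((c - t) / 2 - (z : ℤ) : ℤ) : ℚ)) * (hf c + hf t + 1) / 2) *
      qbin ((a + u) / 2 + z) ((a + c - b) / 2) *
      qbin ((b + v) / 2 + ((c - t) / 2 - (z : ℤ))) ((b + c - a) / 2) *
      qbin ((c - t) / 2) z

lemma cgSum_mem (a b c u v t : ℤ) (h : 2 ∣ c - t) : cgSum a b c u v t ∈ ZLaurentHalf := by
  obtain ⟨n, hn⟩ := h
  refine sum_mem fun z _ => mul_mem (mul_mem (mul_mem (mul_mem (m1pow_mem _) ?_)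
    (qbin_mem _ _)) (qbin_mem _ _)) (qbin_mem _ _)
  refine qpow_mem_of_two_mul_eq ((2 * z - n) * (n + t + 1)) ?_
  have hc : (c : ℚ) = 2 * n + t := by exact_mod_cast (by omega : c = 2 * n + t)
  rw [show (c - t) / 2 = n by omega]
  simp only [hf, hc]
  push_cast
  ring

theorem NW_integral_general (a b c u v t : ℤ) (h : Adm a b c)
    (h1 : 2 ∣ (a - u)) (h2 : 2 ∣ (b - v)) (h3 : 2 ∣ (c - t))
    (hs : u + v + t = 0) :
    ipow ((a + b + c) / 2) * NW a b c u v t ∈ ZLaurentHalf := by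
  obtain ⟨-, -, hc, hpar, hab, hbc, hca⟩ := h
  obtain ⟨k, hk⟩ := h1
  obtain ⟨l, hl⟩ := h2
  obtain ⟨m, hm⟩ := h3
  have := qfactz_ne_zero hc
  have := qfactz_ne_zero (show 0 ≤ (a + b - c) / 2 by omega)
  have := qfactz_ne_zero (show 0 ≤ (b + c - a) / 2 by omega)
  have := qfactz_ne_zero (show 0 ≤ (c + a - b) / 2 by omega)
  rw [NW, W, CG, if_pos (by omega), ← cgSum]
  convert_to m1pow m * m1pow ((b - v) / 2 - (c - -t) / 2) *
      qpow ((hf b - hf v) * (hf b + hf v + 1) / 2 - (hf a - hf u) * (hf a + hf u + 1) / 2) *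
      qpow (-hf t) * cgSum a b c u v (-t) ∈ ZLaurentHalf using 1
  · rw [← ipow_two_mul m, show 2 * m = (a + b + c) / 2 + (c - a - b) / 2 + -t by omega,
      ipow_add, ipow_add]
    field_simp
  refine mul_mem (mul_mem (mul_mem (mul_mem (m1pow_mem _) (m1pow_mem _))
    (qpow_mem_of_two_mul_eq (l * (l + v + 1) - k * (k + u + 1)) ?_))
    (qpow_mem_of_two_mul_eq (-t) ?_)) (cgSum_mem _ _ _ _ _ _ ⟨m + t, by omega⟩)
  · have ha : (a : ℚ) = 2 * k + u := by exact_mod_cast (by omega : a = 2 * k + u)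
    have hb : (b : ℚ) = 2 * l + v := by exact_mod_cast (by omega : b = 2 * l + v)
    simp only [hf, ha, hb]
    push_cast
    ring
  · simp only [hf]
    push_cast
    ring

/-- Integrality of renormalized vertex weights: for an admissible
triple `(a,b,c)` and weights `u,v,t` with `|u| ≤ a`, `|v| ≤ b`, `|t| ≤ c`,
`u−a, v−b, t−c ∈ ℤ` and `u+v+t = 0`, the element `i^{a+b+c} · NW^{a,b,c}_{u,v,t}`
is a Laurent polynomial in `q^{1/2}` with integer coefficients.
(Half-integers are encoded by their doubles.) -/
theorem NW_integral (a b c u v t : ℤ) (h : Adm a b c)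
    (hu : |u| ≤ a) (hv : |v| ≤ b) (ht : |t| ≤ c)
    (h1 : 2 ∣ (a - u)) (h2 : 2 ∣ (b - v)) (h3 : 2 ∣ (c - t))
    (hs : u + v + t = 0) :
    ipow ((a + b + c) / 2) * NW a b c u v t ∈ ZLaurentHalf :=
  NW_integral_general a b c u v t h h1 h2 h3 hs

end QSpin
end
end
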